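/- Let E be a Banach space, 0 < α ≤ 1 < β, and A : {(s,t) : 0 ≤ s ≤ t ≤ T} → E with A_{t,t} = 0, ‖A‖_α := sup_{s<t} ‖A_{s,t}‖/|t-s|^α < ∞ and ‖δA‖_β := sup_{s<u<t} ‖A_{s,t} - A_{s,u} - A_{u,t}‖/|t-s|^β < ∞. Then for every 0 ≤ s ≤ t ≤ T the Riemann-type sums Σ_{[u,v]∈𝒫} A_{u,v} over partitions 𝒫 of [s,t] converge as the mesh tends to zero to a limit (ℐA)_{s,t}, the map t ↦ (ℐA)_{0,t} is α-Hölder continuous, and ‖(ℐA)_{s,t} - A_{s,t}‖ ≤ c·‖δA‖_β·|t-s|^β with c depending only on β. -/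

import Mathlib

/-!
Let `S n s t` be the Riemann sum of `A` over the dyadic grid `j T / 2 ^ n` of `[0, T]`, clamped
to `[s, t]`. Halving the grid changes `S n s t` by one `δA` term per coarse interval, in total at
most `K (T / 2 ^ n) ^ (β - 1) (t - s)`; since `β > 1` this is summable in `n`, so `S n 0 t`
converges to some `I t`. Because all these partitions are clampings of one grid,
`S n 0 t - S n 0 s - S n s t` only involves the `δA` term of the interval straddling `s`, which
vanishes as `n → ∞`. Young's point-removal argument bounds `S n s t - A s t` by
`C K (t - s) ^ β` uniformly in `n`, where `C = ∑ r, (2 / r) ^ β`; hence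
`‖I t - I s - A s t‖ ≤ C K (t - s) ^ β`. Convergence of arbitrary Riemann sums then follows by
telescoping: over a partition of mesh `δ` the errors add up to at most `C K δ ^ (β - 1) (t - s)`.
-/

open Finset Filter Topology

structure IsPartition (a b : ℝ) (n : ℕ) (π : ℕ → ℝ) : Prop where
  zero : π 0 = a
  last : π n = b
  le_succ : ∀ i < n, π i ≤ π (i + 1)

namespace IsPartition

variable {a b δ β : ℝ} {n k q : ℕ} {π : ℕ → ℝ}

theorem monotoneOn (hπ : IsPartition a b n π) : MonotoneOn π (Set.Iic n) :=
  monotoneOn_of_le_succ Set.ordConnected_Iic fun i _ _ hi =>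
    hπ.le_succ i (Order.succ_eq_add_one i ▸ hi : i + 1 ≤ n)

theorem mem_Icc (hπ : IsPartition a b n π) {i : ℕ} (hi : i ≤ n) : π i ∈ Set.Icc a b :=
  ⟨hπ.zero ▸ hπ.monotoneOn (Nat.zero_le n) hi (Nat.zero_le i),
    hπ.last ▸ hπ.monotoneOn hi (Set.mem_Iic.mpr le_rfl) hi⟩

theorem le (hπ : IsPartition a b n π) : a ≤ b :=
  hπ.last ▸ (hπ.mem_Icc le_rfl).1

theorem sum_sub (hπ : IsPartition a b n π) : ∑ i ∈ range n, (π (i + 1) - π i) = b - a := by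
  rw [sum_range_sub, hπ.zero, hπ.last]

theorem sum_rpow_sub_le (hπ : IsPartition a b n π) (hβ : 1 ≤ β)
    (hmesh : ∀ i < n, π (i + 1) - π i ≤ δ) :
    ∑ i ∈ range n, (π (i + 1) - π i) ^ β ≤ δ ^ (β - 1) * (b - a) := by
  rw [← hπ.sum_sub, mul_sum]
  refine sum_le_sum fun i hi => ?_
  have hi := mem_range.mp hi
  have hΔ : 0 ≤ π (i + 1) - π i := sub_nonneg.mpr (hπ.le_succ i hi)
  calc (π (i + 1) - π i) ^ β = (π (i + 1) - π i) ^ (β - 1) * (π (i + 1) - π i) := by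
        rw [← Real.rpow_add_one' hΔ (by linarith), sub_add_cancel]
    _ ≤ δ ^ (β - 1) * (π (i + 1) - π i) :=
        mul_le_mul_of_nonneg_right (Real.rpow_le_rpow hΔ (hmesh i hi) (by linarith)) hΔ

theorem exists_sub_le_two_div (hπ : IsPartition a b (k + 1) π) (hk : 0 < k) :
    ∃ q < k, π (q + 2) - π q ≤ (b - a) * (2 / k) := by
  have hsum : ∑ q ∈ range k, (π (q + 2) - π q) ≤ ∑ _q ∈ range k, (b - a) * (2 / k) := by
    have h1 : π 1 ∈ Set.Icc a b := hπ.mem_Icc (by omega)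
    have hk' : π k ∈ Set.Icc a b := hπ.mem_Icc (by omega)
    have hsplit : ∑ q ∈ range k, (π (q + 2) - π q)
        = ∑ q ∈ range k, (π (q + 1 + 1) - π (q + 1)) + ∑ q ∈ range k, (π (q + 1) - π q) := by
      rw [← sum_add_distrib]; exact sum_congr rfl fun q _ => by ring
    rw [hsplit, sum_range_sub (fun i => π (i + 1)), sum_range_sub, sum_const, card_range,
      nsmul_eq_mul, hπ.last, hπ.zero]
    field_simp
    linarith [h1.1, hk'.2]
  obtain ⟨q, hq, h⟩ := exists_le_of_sum_le (nonempty_range_iff.mpr hk.ne') hsum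
  exact ⟨q, mem_range.mp hq, h⟩

theorem skip (hπ : IsPartition a b (k + 1) π) (hq : q < k) :
    IsPartition a b k fun i => π (if i ≤ q then i else i + 1) := by
  refine ⟨by simpa using hπ.zero, by simpa [show ¬k ≤ q by omega] using hπ.last, fun i hi => ?_⟩
  by_cases hiq : i ≤ q
  · by_cases hiq' : i + 1 ≤ q
    · simpa [hiq, hiq'] using hπ.le_succ i (by omega)
    · simpa [hiq, hiq', show i = q by omega] using
        (hπ.le_succ q (by omega)).trans (hπ.le_succ (q + 1) (by omega))
  · simpa [hiq, show ¬i + 1 ≤ q by omega] using hπ.le_succ (i + 1) (by omega)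

end IsPartition

def riemannSum {M : Type*} [AddCommMonoid M] (A : ℝ → ℝ → M) (n : ℕ) (π : ℕ → ℝ) : M :=
  ∑ i ∈ range n, A (π i) (π (i + 1))

section RiemannSum

variable {M : Type*} [AddCommGroup M] (A : ℝ → ℝ → M) (π : ℕ → ℝ)

theorem riemannSum_skip {k q : ℕ} (hq : q < k) :
    riemannSum A (k + 1) π = riemannSum A k (fun i => π (if i ≤ q then i else i + 1))
      + (A (π q) (π (q + 1)) + A (π (q + 1)) (π (q + 2)) - A (π q) (π (q + 2))) := by
  obtain ⟨r, rfl⟩ : ∃ r, k = q + 1 + r := ⟨k - (q + 1), by omega⟩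
  have hhead : ∑ i ∈ range q, A (π (if i ≤ q then i else i + 1))
      (π (if i + 1 ≤ q then i + 1 else i + 1 + 1)) = ∑ i ∈ range q, A (π i) (π (i + 1)) :=
    sum_congr rfl fun i hi => by
      have := mem_range.mp hi
      simp [show i ≤ q by omega, show i + 1 ≤ q by omega]
  have htail : ∀ x, A (π (if q + 1 + x ≤ q then q + 1 + x else q + 1 + x + 1))
      (π (if q + 1 + x + 1 ≤ q then q + 1 + x + 1 else q + 1 + x + 1 + 1))
      = A (π (q + 2 + x)) (π (q + 2 + x + 1)) := fun x => by
    simp only [show ¬q + 1 + x ≤ q by omega, show ¬q + 1 + x + 1 ≤ q by omega, if_false]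
    congr 2 <;> omega
  simp only [riemannSum]
  rw [show q + 1 + r + 1 = q + 2 + r by omega, sum_range_add _ (q + 2), sum_range_add _ (q + 1),
    sum_range_succ _ (q + 1), sum_range_succ _ q, sum_range_succ _ q, hhead]
  simp only [htail, le_refl, if_true, show ¬q + 1 ≤ q by omega, if_false]
  abel

theorem riemannSum_two_mul_sub (N : ℕ) :
    riemannSum A N (fun j => π (2 * j)) - riemannSum A (2 * N) π
      = ∑ j ∈ range N, (A (π (2 * j)) (π (2 * j + 2)) - A (π (2 * j)) (π (2 * j + 1))
          - A (π (2 * j + 1)) (π (2 * j + 2))) := by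
  induction N with
  | zero => simp [riemannSum]
  | succ N ih =>
    simp only [riemannSum] at ih ⊢
    rw [show 2 * (N + 1) = 2 * N + 1 + 1 by ring, sum_range_succ, sum_range_succ, sum_range_succ,
      sum_range_succ, ← ih, show 2 * (N + 1) = 2 * N + 2 by ring]
    abel

end RiemannSum

noncomputable def sewingConst (β : ℝ) : ℝ := ∑' r : ℕ, (2 / r : ℝ) ^ β

theorem summable_sewingConst {β : ℝ} (hβ : 1 < β) : Summable fun r : ℕ => (2 / r : ℝ) ^ β :=
  ((Real.summable_one_div_nat_rpow.mpr hβ).mul_left (2 ^ β)).congr fun r => by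
    rw [Real.div_rpow zero_le_two r.cast_nonneg, mul_one_div]

theorem sum_le_sewingConst {β : ℝ} (hβ : 1 < β) (n : ℕ) :
    ∑ r ∈ range n, (2 / r : ℝ) ^ β ≤ sewingConst β :=
  (summable_sewingConst hβ).sum_le_tsum _ fun r _ => by positivity

theorem sewingConst_pos {β : ℝ} (hβ : 1 < β) : 0 < sewingConst β :=
  (summable_sewingConst hβ).tsum_pos (fun r => by positivity) 1 (by norm_num; positivity)

theorem div_two_pow_rpow {x : ℝ} (hx : 0 ≤ x) (γ : ℝ) (n : ℕ) :
    (x / 2 ^ n) ^ γ = x ^ γ * ((2 : ℝ) ^ (-γ)) ^ n := by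
  rw [Real.div_rpow hx (by positivity), ← Real.rpow_pow_comm zero_le_two, Real.rpow_neg zero_le_two,
    inv_pow, div_eq_mul_inv]

theorem tendsto_div_two_pow_rpow {x γ : ℝ} (hx : 0 ≤ x) (hγ : 0 < γ) :
    Tendsto (fun n : ℕ => (x / 2 ^ n) ^ γ) atTop (𝓝 0) := by
  simp_rw [div_two_pow_rpow hx]
  simpa using (tendsto_pow_atTop_nhds_zero_of_lt_one (by positivity)
    (Real.rpow_lt_one_of_one_lt_of_neg one_lt_two (neg_neg_of_pos hγ))).const_mul (x ^ γ)

theorem rpow_le_rpow_sub_mul_rpow {x T α β : ℝ} (hx : 0 ≤ x) (hxT : x ≤ T) (hαβ : α ≤ β)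
    (hβ : 0 < β) : x ^ β ≤ T ^ (β - α) * x ^ α := by
  rcases hx.eq_or_lt with rfl | hx
  · rw [Real.zero_rpow hβ.ne']
    exact mul_nonneg (Real.rpow_nonneg hxT _) (Real.rpow_nonneg le_rfl _)
  · calc x ^ β = x ^ (β - α) * x ^ α := by rw [← Real.rpow_add hx, sub_add_cancel]
      _ ≤ T ^ (β - α) * x ^ α := by gcongr

noncomputable def dyadicPartition (T : ℝ) (n : ℕ) (s t : ℝ) (j : ℕ) : ℝ :=
  max s (min (j * T / 2 ^ n) t)

section Dyadic

variable {T s t : ℝ} {n : ℕ}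

theorem dyadicPartition_mem_Icc (hst : s ≤ t) (j : ℕ) : dyadicPartition T n s t j ∈ Set.Icc s t :=
  ⟨le_max_left _ _, max_le hst (min_le_right _ _)⟩

theorem dyadicPartition_succ_two_mul (j : ℕ) :
    dyadicPartition T (n + 1) s t (2 * j) = dyadicPartition T n s t j := by
  simp only [dyadicPartition]
  congr 2
  push_cast
  field_simp
  ring

theorem dyadicPartition_succ_sub_le (hT : 0 ≤ T) (j : ℕ) :
    dyadicPartition T n s t (j + 1) - dyadicPartition T n s t j ≤ T / 2 ^ n := by
  have hstep : ((j + 1 : ℕ) : ℝ) * T / 2 ^ n = j * T / 2 ^ n + T / 2 ^ n := by push_cast; ring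
  have hnn : 0 ≤ T / 2 ^ n := by positivity
  simp only [dyadicPartition, hstep, max_def, min_def]
  split_ifs <;> linarith

theorem dyadicPartition_le_succ (hT : 0 ≤ T) (j : ℕ) :
    dyadicPartition T n s t j ≤ dyadicPartition T n s t (j + 1) :=
  max_le_max le_rfl (min_le_min (by gcongr; simp) le_rfl)

theorem isPartition_dyadicPartition (hs : 0 ≤ s) (hst : s ≤ t) (htT : t ≤ T) :
    IsPartition s t (2 ^ n) (dyadicPartition T n s t) where
  zero := by simp [dyadicPartition, hs]
  last := by
    simp only [dyadicPartition]
    rw [Nat.cast_pow, Nat.cast_ofNat, mul_div_cancel_left₀ _ (by positivity), min_eq_right htT,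
      max_eq_right hst]
  le_succ i _ := dyadicPartition_le_succ (hs.trans (hst.trans htT)) i

end Dyadic

def DeltaHolderOn {E : Type*} [NormedAddCommGroup E] (A : ℝ → ℝ → E) (K β a b : ℝ) : Prop :=
  ∀ s u t, a ≤ s → s ≤ u → u ≤ t → t ≤ b → ‖A s t - A s u - A u t‖ ≤ K * (t - s) ^ β

noncomputable def sewing {E : Type*} [NormedAddCommGroup E] (A : ℝ → ℝ → E) (T t : ℝ) : E :=
  limUnder atTop fun n => riemannSum A (2 ^ n) (dyadicPartition T n 0 t)

section Sewing

variable {E : Type*} [NormedAddCommGroup E] {A : ℝ → ℝ → E} {K β T a b s t : ℝ}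

namespace DeltaHolderOn

theorem mono (h : DeltaHolderOn A K β a b) {a' b' : ℝ} (ha : a ≤ a') (hb : b' ≤ b) :
    DeltaHolderOn A K β a' b' :=
  fun s u t hs hsu hut ht => h s u t (ha.trans hs) hsu hut (ht.trans hb)

theorem nonneg (h : DeltaHolderOn A K β a b) (hA : ∀ x, A x x = 0) (hab : a < b) : 0 ≤ K := by
  have := h a a b le_rfl le_rfl hab.le le_rfl
  rw [hA, sub_zero, sub_self, norm_zero] at this
  exact nonneg_of_mul_nonneg_left this (Real.rpow_pos_of_pos (sub_pos.mpr hab) β)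

end DeltaHolderOn

/-- Young's argument: a partition with `k + 1` intervals has a point whose two neighbours are at
most `2 (b - a) / k` apart, and deleting it costs one `δA` term. The `r = 0` summand is the
junk value `(2 / 0) ^ β = 0 ^ β`. -/
theorem norm_riemannSum_sub_le_sum (hβ : 0 ≤ β) (hK : 0 ≤ K) (hA : ∀ x, A x x = 0)
    (hδ : DeltaHolderOn A K β a b) {n : ℕ} {π : ℕ → ℝ} (hπ : IsPartition a b n π) :
    ‖riemannSum A n π - A a b‖ ≤ K * (b - a) ^ β * ∑ r ∈ range n, (2 / r : ℝ) ^ β := by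
  induction n generalizing π with
  | zero =>
    simp [riemannSum, ← hπ.last, hπ.zero, hA]
  | succ k ih =>
    have hab : 0 ≤ b - a := sub_nonneg.mpr hπ.le
    rcases Nat.eq_zero_or_pos k with rfl | hk
    · simp only [riemannSum, zero_add, sum_range_one, hπ.zero, hπ.last, sub_self, norm_zero]
      positivity
    obtain ⟨q, hq, hgap⟩ := hπ.exists_sub_le_two_div hk
    have hq0 : π q ∈ Set.Icc a b := hπ.mem_Icc (by omega)
    have hq2 : π (q + 2) ∈ Set.Icc a b := hπ.mem_Icc (by omega)
    have hremove : ‖A (π q) (π (q + 2)) - A (π q) (π (q + 1)) - A (π (q + 1)) (π (q + 2))‖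
        ≤ K * (b - a) ^ β * (2 / k : ℝ) ^ β := by
      refine (hδ _ _ _ hq0.1 (hπ.le_succ q (by omega)) (hπ.le_succ (q + 1) (by omega))
        hq2.2).trans ?_
      rw [mul_assoc, ← Real.mul_rpow hab (by positivity)]
      gcongr
      linarith [hπ.le_succ q (by omega), hπ.le_succ (q + 1) (by omega)]
    rw [riemannSum_skip A π hq, sum_range_succ, mul_add]
    calc _ = ‖(riemannSum A k (fun i => π (if i ≤ q then i else i + 1)) - A a b)
          - (A (π q) (π (q + 2)) - A (π q) (π (q + 1)) - A (π (q + 1)) (π (q + 2)))‖ := by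
          congr 1; abel
      _ ≤ _ := (norm_sub_le _ _).trans (add_le_add (ih (hπ.skip hq)) hremove)

theorem norm_riemannSum_sub_le (hβ : 1 < β) (hK : 0 ≤ K) (hA : ∀ x, A x x = 0)
    (hδ : DeltaHolderOn A K β a b) {n : ℕ} {π : ℕ → ℝ} (hπ : IsPartition a b n π) :
    ‖riemannSum A n π - A a b‖ ≤ sewingConst β * K * (b - a) ^ β := by
  have hab : 0 ≤ b - a := sub_nonneg.mpr hπ.le
  calc _ ≤ K * (b - a) ^ β * ∑ r ∈ range n, (2 / r : ℝ) ^ β :=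
        norm_riemannSum_sub_le_sum (by linarith) hK hA hδ hπ
    _ ≤ K * (b - a) ^ β * sewingConst β := by gcongr; exact sum_le_sewingConst hβ n
    _ = sewingConst β * K * (b - a) ^ β := by ring

theorem norm_clamp_sub_sub_le (hA : ∀ x, A x x = 0) (hK : 0 ≤ K)
    (hδ : DeltaHolderOn A K β a t) (has : a ≤ s) (hst : s ≤ t) {x y : ℝ} (hxy : x ≤ y) :
    ‖A (max a (min x t)) (max a (min y t)) - A (max a (min x s)) (max a (min y s))
      - A (max s (min x t)) (max s (min y t))‖ ≤ K * (max a (min y t) - max a (min x t)) ^ β := by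
  have hpr : max a (min x t) ≤ max a (min y t) := max_le_max le_rfl (min_le_min hxy le_rfl)
  have hrhs : 0 ≤ K * (max a (min y t) - max a (min x t)) ^ β :=
    mul_nonneg hK (Real.rpow_nonneg (sub_nonneg.mpr hpr) β)
  rcases le_total y s with hys | hsy
  · refine (norm_eq_zero.mpr ?_).trans_le hrhs
    have hx : min x t = min x s := by rw [min_eq_left (by linarith), min_eq_left (by linarith)]
    have hy : min y t = min y s := by rw [min_eq_left (by linarith), min_eq_left hys]
    rw [← hx, ← hy, max_eq_left (a := s) (min_le_of_left_le (by linarith)),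
      max_eq_left (a := s) (min_le_of_left_le hys), hA]
    abel
  rcases le_total s x with hsx | hxs
  · refine (norm_eq_zero.mpr ?_).trans_le hrhs
    rw [min_eq_right (a := x) hsx, min_eq_right (a := y) hsy, max_eq_right has,
      max_eq_right (a := s) (le_min hsx hst), max_eq_right (a := s) (le_min (hsx.trans hxy) hst),
      max_eq_right (a := a) (le_min (has.trans hsx) (has.trans hst)),
      max_eq_right (a := a) (le_min (has.trans (hsx.trans hxy)) (has.trans hst)), hA]
    abel
  · have hx : min x t = min x s := by rw [min_eq_left (hxs.trans hst), min_eq_left hxs]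
    rw [← hx, min_eq_right hsy, max_eq_right has, max_eq_left (min_le_of_left_le hxs),
      max_eq_right (le_min hsy hst), max_eq_right (le_min (has.trans hsy) (has.trans hst))]
    exact hδ _ _ _ (le_max_left _ _) (max_le has (min_le_of_left_le hxs)) (le_min hsy hst)
      (min_le_right _ _)

theorem norm_riemannSum_sub_sub_le {n : ℕ} {π : ℕ → ℝ} (hπ : IsPartition a b n π) {I : ℝ → E}
    (hI : ∀ u v, a ≤ u → u ≤ v → v ≤ b → ‖I v - I u - A u v‖ ≤ K * (v - u) ^ β) :
    ‖riemannSum A n π - (I b - I a)‖ ≤ K * ∑ i ∈ range n, (π (i + 1) - π i) ^ β := by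
  rw [← hπ.zero, ← hπ.last, ← sum_range_sub (fun i => I (π i)), riemannSum, ← sum_sub_distrib,
    mul_sum]
  refine (norm_sum_le _ _).trans (sum_le_sum fun i hi => ?_)
  have hi := mem_range.mp hi
  rw [← norm_neg, neg_sub]
  exact hI _ _ (hπ.mem_Icc hi.le).1 (hπ.le_succ i hi) (hπ.mem_Icc hi).2

theorem exists_forall_norm_riemannSum_sub_lt (hK : 0 ≤ K) (hβ : 1 < β) {I : ℝ → E}
    (hI : ∀ u v, a ≤ u → u ≤ v → v ≤ b → ‖I v - I u - A u v‖ ≤ K * (v - u) ^ β) {ε : ℝ}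
    (hε : 0 < ε) :
    ∃ δ > 0, ∀ n π, IsPartition a b n π → (∀ i < n, π (i + 1) - π i < δ) →
      ‖riemannSum A n π - (I b - I a)‖ < ε := by
  have hlim : Tendsto (fun δ => K * (δ ^ (β - 1) * (b - a))) (𝓝[>] 0) (𝓝 0) := by
    simpa [Real.zero_rpow (sub_pos.mpr hβ).ne'] using
      (((Real.continuousAt_rpow_const 0 (β - 1) (Or.inr (sub_pos.mpr hβ).le)).tendsto.mono_left
        nhdsWithin_le_nhds).mul_const (b - a)).const_mul K
  obtain ⟨δ, hδ, hδpos⟩ := ((hlim.eventually (gt_mem_nhds hε)).and self_mem_nhdsWithin).exists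
  refine ⟨δ, hδpos, fun n π hπ hmesh => ?_⟩
  calc _ ≤ K * ∑ i ∈ range n, (π (i + 1) - π i) ^ β := norm_riemannSum_sub_sub_le hπ hI
    _ ≤ K * (δ ^ (β - 1) * (b - a)) := by
        gcongr
        exact hπ.sum_rpow_sub_le hβ.le fun i hi => (hmesh i hi).le
    _ < ε := hδ

theorem norm_riemannSum_dyadicPartition_sub_succ_le (hK : 0 ≤ K) (hβ : 1 ≤ β)
    (hδ : DeltaHolderOn A K β s t) (hs : 0 ≤ s) (hst : s ≤ t) (htT : t ≤ T) (n : ℕ) :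
    ‖riemannSum A (2 ^ n) (dyadicPartition T n s t)
      - riemannSum A (2 ^ (n + 1)) (dyadicPartition T (n + 1) s t)‖
      ≤ K * ((T / 2 ^ n) ^ (β - 1) * (t - s)) := by
  set ρ := dyadicPartition T (n + 1) s t
  have hT : 0 ≤ T := hs.trans (hst.trans htT)
  have hcoarse : dyadicPartition T n s t = fun j => ρ (2 * j) :=
    funext fun j => (dyadicPartition_succ_two_mul j).symm
  have hmem : ∀ j, ρ j ∈ Set.Icc s t := dyadicPartition_mem_Icc hst
  have hle : ∀ j, ρ j ≤ ρ (j + 1) := dyadicPartition_le_succ hT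
  rw [hcoarse, pow_succ, mul_comm _ 2, riemannSum_two_mul_sub]
  refine (norm_sum_le _ _).trans ?_
  calc _ ≤ ∑ j ∈ range (2 ^ n), K * (ρ (2 * (j + 1)) - ρ (2 * j)) ^ β :=
        sum_le_sum fun j _ => hδ _ _ _ (hmem _).1 (hle _) (hle _) (hmem _).2
    _ ≤ _ := by
        rw [← mul_sum]
        gcongr
        simp only [ρ, dyadicPartition_succ_two_mul]
        exact (isPartition_dyadicPartition hs hst htT).sum_rpow_sub_le hβ fun j _ =>
          dyadicPartition_succ_sub_le hT j

theorem norm_riemannSum_dyadicPartition_sub_sub_le (hA : ∀ x, A x x = 0) (hK : 0 ≤ K)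
    (hβ : 1 ≤ β) (hδ : DeltaHolderOn A K β a t) (ha : 0 ≤ a) (has : a ≤ s) (hst : s ≤ t)
    (htT : t ≤ T) (n : ℕ) :
    ‖riemannSum A (2 ^ n) (dyadicPartition T n a t) - riemannSum A (2 ^ n) (dyadicPartition T n a s)
      - riemannSum A (2 ^ n) (dyadicPartition T n s t)‖
      ≤ K * ((T / 2 ^ n) ^ (β - 1) * (t - a)) := by
  have hT : 0 ≤ T := ha.trans (has.trans (hst.trans htT))
  simp only [riemannSum, ← sum_sub_distrib]
  refine (norm_sum_le _ _).trans ?_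
  calc _ ≤ ∑ j ∈ range (2 ^ n),
        K * (dyadicPartition T n a t (j + 1) - dyadicPartition T n a t j) ^ β :=
        sum_le_sum fun j _ => norm_clamp_sub_sub_le hA hK hδ has hst (by gcongr; simp)
    _ ≤ _ := by
        rw [← mul_sum]
        gcongr
        exact (isPartition_dyadicPartition ha (has.trans hst) htT).sum_rpow_sub_le hβ fun j _ =>
          dyadicPartition_succ_sub_le hT j

theorem cauchySeq_riemannSum_dyadicPartition (hK : 0 ≤ K) (hβ : 1 < β)
    (hδ : DeltaHolderOn A K β s t) (hs : 0 ≤ s) (hst : s ≤ t) (htT : t ≤ T) :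
    CauchySeq fun n => riemannSum A (2 ^ n) (dyadicPartition T n s t) := by
  refine cauchySeq_of_le_geometric _ (K * T ^ (β - 1) * (t - s))
    (Real.rpow_lt_one_of_one_lt_of_neg one_lt_two (by linarith : -(β - 1) < 0)) fun n => ?_
  rw [dist_eq_norm]
  refine (norm_riemannSum_dyadicPartition_sub_succ_le hK hβ.le hδ hs hst htT n).trans_eq ?_
  rw [div_two_pow_rpow (hs.trans (hst.trans htT))]
  ring

theorem sewing_zero (hA : ∀ x, A x x = 0) : sewing A T 0 = 0 := by
  have hconst : (fun n => riemannSum A (2 ^ n) (dyadicPartition T n 0 0)) = fun _ => 0 := by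
    ext n
    simp [riemannSum, dyadicPartition, hA]
  rw [sewing, hconst]
  exact tendsto_const_nhds.limUnder_eq

theorem tendsto_sewing [CompleteSpace E] (hK : 0 ≤ K) (hβ : 1 < β)
    (hδ : DeltaHolderOn A K β 0 T) (ht : 0 ≤ t) (htT : t ≤ T) :
    Tendsto (fun n => riemannSum A (2 ^ n) (dyadicPartition T n 0 t)) atTop
      (𝓝 (sewing A T t)) :=
  (cauchySeq_riemannSum_dyadicPartition hK hβ (hδ.mono le_rfl htT) le_rfl ht htT).tendsto_limUnder

theorem norm_sewing_sub_sub_le [CompleteSpace E] (hA : ∀ x, A x x = 0) (hK : 0 ≤ K)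
    (hβ : 1 < β) (hδ : DeltaHolderOn A K β 0 T) (hs : 0 ≤ s) (hst : s ≤ t)
    (htT : t ≤ T) :
    ‖sewing A T t - sewing A T s - A s t‖ ≤ sewingConst β * K * (t - s) ^ β := by
  set S : ℝ → ℝ → ℕ → E := fun u v n => riemannSum A (2 ^ n) (dyadicPartition T n u v)
  have hlim : Tendsto (fun n => ‖S 0 t n - S 0 s n - A s t‖) atTop
      (𝓝 ‖sewing A T t - sewing A T s - A s t‖) :=
    (((tendsto_sewing hK hβ hδ (hs.trans hst) htT).sub
      (tendsto_sewing hK hβ hδ hs (hst.trans htT))).sub_const _).norm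
  have hbound : Tendsto (fun n : ℕ => K * ((T / 2 ^ n) ^ (β - 1) * (t - 0))
      + sewingConst β * K * (t - s) ^ β) atTop (𝓝 (sewingConst β * K * (t - s) ^ β)) := by
    simpa using (((tendsto_div_two_pow_rpow (hs.trans (hst.trans htT)) (sub_pos.mpr hβ)).mul_const
      (t - 0)).const_mul K).add_const (sewingConst β * K * (t - s) ^ β)
  refine le_of_tendsto_of_tendsto hlim hbound (Eventually.of_forall fun n => ?_)
  calc ‖S 0 t n - S 0 s n - A s t‖ = ‖(S 0 t n - S 0 s n - S s t n) + (S s t n - A s t)‖ := by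
        congr 1; abel
    _ ≤ _ := (norm_add_le _ _).trans (add_le_add
        (norm_riemannSum_dyadicPartition_sub_sub_le hA hK hβ.le (hδ.mono le_rfl htT) le_rfl hs hst
          htT n)
        (norm_riemannSum_sub_le hβ hK hA (hδ.mono hs htT) (isPartition_dyadicPartition hs hst htT)))

end Sewing

theorem stmt_7_general (α β : ℝ) (hα1 : α ≤ 1) (hβ : 1 < β) :
    ∃ c > (0:ℝ), ∀ (E : Type) [NormedAddCommGroup E] [NormedSpace ℝ E] [CompleteSpace E],
      ∀ (T : ℝ), 0 < T → ∀ (A : ℝ → ℝ → E) (Ka Kb : ℝ),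
      (∀ t, A t t = 0) →
      (∀ s t, 0 ≤ s → s ≤ t → t ≤ T → ‖A s t‖ ≤ Ka * (t - s) ^ α) →
      (∀ s u t, 0 ≤ s → s ≤ u → u ≤ t → t ≤ T →
        ‖A s t - A s u - A u t‖ ≤ Kb * (t - s) ^ β) →
      ∃ I : ℝ → E, I 0 = 0 ∧
        (∀ s t, 0 ≤ s → s ≤ t → t ≤ T → ∀ ε > (0:ℝ), ∃ δ > (0:ℝ),
          ∀ (n : ℕ) (π : ℕ → ℝ), π 0 = s → π n = t →
            (∀ i < n, π i ≤ π (i + 1)) → (∀ i < n, π (i + 1) - π i < δ) →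
            ‖(∑ i ∈ Finset.range n, A (π i) (π (i + 1))) - (I t - I s)‖ < ε) ∧
        (∃ CH : ℝ, ∀ s t, 0 ≤ s → s ≤ t → t ≤ T → ‖I t - I s‖ ≤ CH * (t - s) ^ α) ∧
        (∀ s t, 0 ≤ s → s ≤ t → t ≤ T → ‖(I t - I s) - A s t‖ ≤ c * Kb * (t - s) ^ β) := by
  refine ⟨sewingConst β, sewingConst_pos hβ, fun E _ _ _ T hT A Ka Kb hA0 hA hδ => ?_⟩
  have hKb : 0 ≤ Kb := DeltaHolderOn.nonneg hδ hA0 hT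
  have hCKb : 0 ≤ sewingConst β * Kb := mul_nonneg (sewingConst_pos hβ).le hKb
  have hsew : ∀ s t, 0 ≤ s → s ≤ t → t ≤ T →
      ‖sewing A T t - sewing A T s - A s t‖ ≤ sewingConst β * Kb * (t - s) ^ β :=
    fun s t hs hst htT => norm_sewing_sub_sub_le hA0 hKb hβ hδ hs hst htT
  refine ⟨sewing A T, sewing_zero hA0, fun s t hs hst htT ε hε => ?_,
    ⟨sewingConst β * Kb * T ^ (β - α) + Ka, fun s t hs hst htT => ?_⟩, hsew⟩
  · obtain ⟨δ, hδpos, hclose⟩ := exists_forall_norm_riemannSum_sub_lt hCKb hβ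
      (fun u v hu huv hv => hsew u v (hs.trans hu) huv (hv.trans htT)) hε
    exact ⟨δ, hδpos, fun n π h0 hn hmono hmesh => hclose n π ⟨h0, hn, hmono⟩ hmesh⟩
  · calc ‖sewing A T t - sewing A T s‖
        ≤ ‖sewing A T t - sewing A T s - A s t‖ + ‖A s t‖ := by
          rw [add_comm]; exact norm_le_norm_add_norm_sub' _ _
      _ ≤ sewingConst β * Kb * (t - s) ^ β + Ka * (t - s) ^ α :=
          add_le_add (hsew s t hs hst htT) (hA s t hs hst htT)
      _ ≤ sewingConst β * Kb * (T ^ (β - α) * (t - s) ^ α) + Ka * (t - s) ^ α := by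
          gcongr
          exact rpow_le_rpow_sub_mul_rpow (sub_nonneg.mpr hst) (by linarith) (by linarith)
            (by linarith)
      _ = (sewingConst β * Kb * T ^ (β - α) + Ka) * (t - s) ^ α := by ring

/-- The Sewing Lemma (Gubinelli): a germ `A` with `A_{t,t} = 0`, `‖A_{s,t}‖ ≤ Ka |t-s|^α`
and `‖δA_{s,u,t}‖ ≤ Kb |t-s|^β` (`0 < α ≤ 1 < β`) admits a sewing `I` : Riemann-type sums
converge, `t ↦ I_t` is `α`-Hölder, `I_0 = 0`, and `‖I_t - I_s - A_{s,t}‖ ≤ c Kb |t-s|^β`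
with `c = c(β)`. -/
theorem stmt_7 (α β : ℝ) (hα : 0 < α) (hα1 : α ≤ 1) (hβ : 1 < β) :
    ∃ c > (0:ℝ), ∀ (E : Type) [NormedAddCommGroup E] [NormedSpace ℝ E] [CompleteSpace E],
      ∀ (T : ℝ), 0 < T → ∀ (A : ℝ → ℝ → E) (Ka Kb : ℝ),
      (∀ t, A t t = 0) →
      (∀ s t, 0 ≤ s → s ≤ t → t ≤ T → ‖A s t‖ ≤ Ka * (t - s) ^ α) →
      (∀ s u t, 0 ≤ s → s ≤ u → u ≤ t → t ≤ T →
        ‖A s t - A s u - A u t‖ ≤ Kb * (t - s) ^ β) →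
      ∃ I : ℝ → E, I 0 = 0 ∧
        (∀ s t, 0 ≤ s → s ≤ t → t ≤ T → ∀ ε > (0:ℝ), ∃ δ > (0:ℝ),
          ∀ (n : ℕ) (π : ℕ → ℝ), π 0 = s → π n = t →
            (∀ i < n, π i ≤ π (i + 1)) → (∀ i < n, π (i + 1) - π i < δ) →
            ‖(∑ i ∈ Finset.range n, A (π i) (π (i + 1))) - (I t - I s)‖ < ε) ∧
        (∃ CH : ℝ, ∀ s t, 0 ≤ s → s ≤ t → t ≤ T → ‖I t - I s‖ ≤ CH * (t - s) ^ α) ∧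
        (∀ s t, 0 ≤ s → s ≤ t → t ≤ T → ‖(I t - I s) - A s t‖ ≤ c * Kb * (t - s) ^ β) :=
  stmt_7_general α β hα1 hβ
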